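/- arXiv:1304.5900 — 3 statements merged into one kernel-verified Lean document; each statement's English description precedes it below -/
import Mathlib

section
/- The lattice A on Z³ with Gram matrix [[3,1,4],[1,3,4],[4,4,12]] contains no element τ with b(τ,τ) = 10. -/
open Matrix

/-- The lattice `A = ℤ³` with Gram matrix `[[3,1,4],[1,3,4],[4,4,12]]` contains
no element `τ` with `b(τ,τ) = 10`. -/
theorem no_vector_of_norm_ten :
    ¬ ∃ τ : Fin 3 → ℤ,
      τ ⬝ᵥ (!![3,1,4;1,3,4;4,4,12] : Matrix (Fin 3) (Fin 3) ℤ).mulVec τ = 10 := by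
  rintro ⟨τ, h⟩
  set x := τ 0 with hx
  set y := τ 1 with hy
  set z := τ 2 with hz
  have h' : 3*x^2 + 3*y^2 + 12*z^2 + 2*x*y + 8*x*z + 8*y*z = 10 := by
    simp [dotProduct, mulVec, Fin.sum_univ_three] at h
    linarith [h]
  have h3 : (3*x+y+4*z)^2 + 8*(y+z)^2 + 12*z^2 = 30 := by linear_combination 3*h'
  have hzsq : 12*z^2 ≤ 30 := by nlinarith [sq_nonneg (3*x+y+4*z), sq_nonneg (y+z)]
  have hysq : 8*(y+z)^2 ≤ 30 := by nlinarith [sq_nonneg (3*x+y+4*z), sq_nonneg z]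
  have hwsq : (3*x+y+4*z)^2 ≤ 30 := by nlinarith [sq_nonneg (y+z), sq_nonneg z]
  have t1 : 2*z ≤ 3 := by nlinarith [sq_nonneg (z-1)]
  have t2 : -3 ≤ 2*z := by nlinarith [sq_nonneg (z+1)]
  have t3 : 4*(y+z) ≤ 7 := by nlinarith [sq_nonneg (y+z-2)]
  have t4 : -7 ≤ 4*(y+z) := by nlinarith [sq_nonneg (y+z+2)]
  have t5 : 12*(3*x+y+4*z) ≤ 66 := by nlinarith [sq_nonneg (3*x+y+4*z-6)]
  have t6 : -66 ≤ 12*(3*x+y+4*z) := by nlinarith [sq_nonneg (3*x+y+4*z+6)]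
  have hxb : -3 ≤ x ∧ x ≤ 3 := by omega
  have hyb : -2 ≤ y ∧ y ≤ 2 := by omega
  have hzb : -1 ≤ z ∧ z ≤ 1 := by omega
  obtain ⟨hx1, hx2⟩ := hxb
  obtain ⟨hy1, hy2⟩ := hyb
  obtain ⟨hz1, hz2⟩ := hzb
  interval_cases x <;> interval_cases y <;> interval_cases z <;> omega
end

section
/- For the quadratic form q(x,y,z) = 3x² + 3y² + 12z² + 2xy + 8xz + 8yz, for all integers x,y,z we have q(x,y,z) ≠ 10; equivalently, 3x² + 3y² + 12z² + 2xy + 8xz + 8yz = 10 has no integer solutions. -/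
/-- The quadratic form `q(x,y,z) = 3x² + 3y² + 12z² + 2xy + 8xz + 8yz` of the
Gram matrix `[[3,1,4],[1,3,4],[4,4,12]]` never takes the value 10: the equation
`3x² + 3y² + 12z² + 2xy + 8xz + 8yz = 10` has no integer solutions. -/
theorem quadratic_form_never_ten (x y z : ℤ) :
    3 * x ^ 2 + 3 * y ^ 2 + 12 * z ^ 2 + 2 * x * y + 8 * x * z + 8 * y * z ≠ 10 := by
  intro h
  have h8 : (3 * (x : ZMod 8) ^ 2 + 3 * (y : ZMod 8) ^ 2 + 12 * (z : ZMod 8) ^ 2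
      + 2 * (x : ZMod 8) * y + 8 * (x : ZMod 8) * z + 8 * (y : ZMod 8) * z = 10) := by
    exact_mod_cast congrArg (Int.cast : ℤ → ZMod 8) h
  revert h8
  generalize (x : ZMod 8) = a
  generalize (y : ZMod 8) = b
  generalize (z : ZMod 8) = c
  revert a b c
  decide
end

section
/- A rank-2 even lattice with Gram matrix [[0,3],[3,2t]] (t ∈ Z) has discriminant −9; conversely, any even rank-2 lattice of discriminant −9 representing 0 (i.e., containing a nonzero isotropic vector) has a basis with Gram matrix of this form for some integer t. -/
/-!
Divide a nonzero isotropic vector by the gcd of its coordinates and complete the resulting primitive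
vector `e` to a basis `(e, f)` of `ℤ²`. In that basis the Gram matrix is `[[0, β], [β, q(f)]]`, whose
determinant `-β²` equals `-9`, so `β = ±3`, and `q(f)` is even. Replacing `e` by `-e` if necessary
makes `β = 3`.
-/

open Matrix

lemma Int.exists_eq_smul_isCoprime {v : Fin 2 → ℤ} (hv : v ≠ 0) :
    ∃ (g : ℤ) (e : Fin 2 → ℤ), IsCoprime (e 0) (e 1) ∧ v = g • e := by
  have hgcd : 0 < Int.gcd (v 0) (v 1) := by
    refine Int.gcd_pos_iff.mpr (not_and_or.mp fun h => hv ?_)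
    ext i; fin_cases i <;> simp [h.1, h.2]
  obtain ⟨g, e₀, e₁, -, he, hv₀, hv₁⟩ := Int.exists_gcd_one' hgcd
  refine ⟨g, ![e₀, e₁], Int.isCoprime_iff_gcd_eq_one.mpr he, ?_⟩
  ext i; fin_cases i <;> simp [hv₀, hv₁, mul_comm]

lemma exists_isotropic_isCoprime (M : Matrix (Fin 2) (Fin 2) ℤ) {v : Fin 2 → ℤ} (hv : v ≠ 0)
    (hMv : v ⬝ᵥ M *ᵥ v = 0) : ∃ e : Fin 2 → ℤ, IsCoprime (e 0) (e 1) ∧ e ⬝ᵥ M *ᵥ e = 0 := by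
  obtain ⟨g, e, he, rfl⟩ := Int.exists_eq_smul_isCoprime hv
  have hg : g ≠ 0 := by rintro rfl; simp at hv
  refine ⟨e, he, ?_⟩
  rw [mulVec_smul, dotProduct_smul, smul_dotProduct, smul_smul, smul_eq_mul] at hMv
  exact (mul_eq_zero.mp hMv).resolve_left (mul_ne_zero hg hg)

lemma exists_det_eq_one_transpose_zero_eq {R : Type*} [CommRing R] {e : Fin 2 → R}
    (he : IsCoprime (e 0) (e 1)) : ∃ P : Matrix (Fin 2) (Fin 2) R, P.det = 1 ∧ Pᵀ 0 = e := by
  obtain ⟨x, y, hxy⟩ := he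
  refine ⟨!![e 0, -y; e 1, x], ?_, ?_⟩
  · rw [det_fin_two_of]
    linear_combination hxy
  · ext i; fin_cases i <;> rfl

lemma Matrix.IsSymm.transpose_mul_mul {R : Type*} [CommSemiring R] {n : Type*} [Fintype n]
    {M : Matrix n n R} (hM : M.IsSymm) (P : Matrix n n R) : (Pᵀ * M * P).IsSymm := by
  simp only [IsSymm, transpose_mul, transpose_transpose, hM.eq, Matrix.mul_assoc]

lemma det_fin_two_of_isSymm_of_apply_zero_zero {R : Type*} [CommRing R]
    {N : Matrix (Fin 2) (Fin 2) R} (hN : N.IsSymm) (h₀₀ : N 0 0 = 0) : N.det = -N 0 1 ^ 2 := by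
  rw [det_fin_two, h₀₀, hN.apply 0 1]
  ring

lemma conj_diag_neg_one_one {R : Type*} [CommRing R] (b c : R) :
    (!![-1, 0; 0, 1] : Matrix (Fin 2) (Fin 2) R)ᵀ * !![0, b; b, c] * !![-1, 0; 0, 1]
      = !![0, -b; -b, c] := by
  rw [eta_fin_two !![(-1 : R), 0; 0, 1]ᵀ]
  simp

lemma exists_transpose_mul_mul_eq_of_det_eq_neg_nine {N : Matrix (Fin 2) (Fin 2) ℤ}
    (hN : N.IsSymm) (h₀₀ : N 0 0 = 0) (h₁₁ : Even (N 1 1)) (hdet : N.det = -9) :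
    ∃ (Q : Matrix (Fin 2) (Fin 2) ℤ) (t : ℤ), IsUnit Q.det ∧ Qᵀ * N * Q = !![0, 3; 3, 2 * t] := by
  obtain ⟨t, ht⟩ := h₁₁
  have hN_eq : N = !![0, N 0 1; N 0 1, 2 * t] := by
    rw [eta_fin_two N, h₀₀, hN.apply 0 1, ht, two_mul]
    rfl
  have h₀₁ : N 0 1 ^ 2 = 3 ^ 2 := by
    linear_combination (hdet.symm.trans (det_fin_two_of_isSymm_of_apply_zero_zero hN h₀₀))
  rcases sq_eq_sq_iff_eq_or_eq_neg.mp h₀₁ with h | h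
  · exact ⟨1, t, by simp, by rw [transpose_one, Matrix.one_mul, Matrix.mul_one, hN_eq, h]⟩
  · refine ⟨!![-1, 0; 0, 1], t, by simp [det_fin_two_of], ?_⟩
    rw [hN_eq, h, conj_diag_neg_one_one, neg_neg]

/-- A rank-2 even lattice with Gram matrix `[[0,3],[3,2t]]` has discriminant
`−9`; conversely, any even rank-2 lattice of discriminant `−9` containing a
nonzero isotropic vector has a basis (i.e. a unimodular change of basis `P`)
with Gram matrix of this form for some integer `t`. -/
theorem even_disc_neg_nine_isotropic_gram :
    (∀ t : ℤ, (!![0,3;3,2*t] : Matrix (Fin 2) (Fin 2) ℤ).det = -9) ∧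
    (∀ M : Matrix (Fin 2) (Fin 2) ℤ, M.IsSymm →
      (∀ v : Fin 2 → ℤ, Even (v ⬝ᵥ M.mulVec v)) →
      M.det = -9 →
      (∃ v : Fin 2 → ℤ, v ≠ 0 ∧ v ⬝ᵥ M.mulVec v = 0) →
      ∃ (P : Matrix (Fin 2) (Fin 2) ℤ) (t : ℤ),
        IsUnit P.det ∧ Pᵀ * M * P = !![0,3;3,2*t]) := by
  refine ⟨fun t => by simp [det_fin_two_of], ?_⟩
  rintro M hM hEven hdet ⟨v, hv, hMv⟩
  obtain ⟨e, he, hMe⟩ := exists_isotropic_isCoprime M hv hMv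
  obtain ⟨P, hP, hPe⟩ := exists_det_eq_one_transpose_zero_eq he
  have h₀₀ : (Pᵀ * M * P) 0 0 = 0 := by rw [mul_mul_apply, hPe, hMe]
  have h₁₁ : Even ((Pᵀ * M * P) 1 1) := by rw [mul_mul_apply]; exact hEven _
  have hdetN : (Pᵀ * M * P).det = -9 := by simp [det_mul, hP, hdet]
  obtain ⟨Q, t, hQ, hQN⟩ :=
    exists_transpose_mul_mul_eq_of_det_eq_neg_nine (hM.transpose_mul_mul P) h₀₀ h₁₁ hdetN
  refine ⟨P * Q, t, by simpa [det_mul, hP] using hQ, ?_⟩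
  rw [transpose_mul, ← hQN]
  simp only [Matrix.mul_assoc]
end
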